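/- arXiv:1510.01459 — 3 statements merged into one kernel-verified Lean document; each statement's English description precedes it below -/
import Mathlib

section
/- Let x : [0,1] → ℝ be the polygonal line with vertices at the points (k/n, y_k) for k = 0, 1, …, n (i.e., x is affine on each interval [k/n, (k+1)/n] with x(k/n) = y_k). Then for 0 < α < 1, the Hölder seminorm sup_{0 ≤ s < t ≤ 1} |x(t) − x(s)|/(t−s)^α is attained at two vertices; in particular it equals max_{0 ≤ i < j ≤ n} |y_j − y_i| / ((j−i)/n)^α. -/
lemma seg_lemma (α : ℝ) (hα0 : 0 < α) (hα1 : α < 1) (A B τ1 τ2 τ : ℝ)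
    (h1 : 0 < τ1) (hl : τ1 ≤ τ) (hr : τ ≤ τ2) :
    |A*τ+B| / τ^α ≤ max (|A*τ1+B| / τ1^α) (|A*τ2+B| / τ2^α) := by
  have h2 : 0 < τ2 := h1.trans_le (hl.trans hr)
  have hτ : 0 < τ := h1.trans_le hl
  set C := max (|A*τ1+B| / τ1^α) (|A*τ2+B| / τ2^α) with hCdef
  have hC0 : 0 ≤ C := le_trans (by positivity) (le_max_left (|A*τ1+B| / τ1^α) _)
  have e1 : |A*τ1+B| ≤ C * τ1^α :=
    (div_le_iff₀ (Real.rpow_pos_of_pos h1 α)).mp (le_max_left _ _)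
  have e2 : |A*τ2+B| ≤ C * τ2^α :=
    (div_le_iff₀ (Real.rpow_pos_of_pos h2 α)).mp (le_max_right _ _)
  rcases eq_or_lt_of_le (hl.trans hr) with heq | hlt
  · have : τ = τ1 := le_antisymm (hr.trans heq.symm.le) hl
    subst this
    exact le_max_left _ _
  · set d := τ2 - τ1 with hd
    have hd0 : 0 < d := by simp only [hd]; linarith
    set a := (τ2 - τ)/d with ha
    set b := (τ - τ1)/d with hb
    have ha0 : 0 ≤ a := div_nonneg (by linarith) hd0.le
    have hb0 : 0 ≤ b := div_nonneg (by linarith) hd0.le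
    have hab : a + b = 1 := by
      rw [ha, hb, ← add_div, div_eq_one_iff_eq hd0.ne', hd]; ring
    have hcomb : a*τ1 + b*τ2 = τ := by
      rw [ha, hb, div_mul_eq_mul_div, div_mul_eq_mul_div, ← add_div, div_eq_iff hd0.ne', hd]; ring
    have hconc := (Real.concaveOn_rpow hα0.le hα1.le).2
      (Set.mem_Ici.mpr h1.le) (Set.mem_Ici.mpr h2.le) ha0 hb0 hab
    simp only [smul_eq_mul] at hconc
    rw [hcomb] at hconc
    have key : |A*τ+B| ≤ C * τ^α := by
      calc |A*τ+B| = |a*(A*τ1+B) + b*(A*τ2+B)| := by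
            congr 1; linear_combination A * hcomb.symm + B * hab.symm
        _ ≤ a*|A*τ1+B| + b*|A*τ2+B| := by
            refine (abs_add_le _ _).trans ?_
            rw [abs_mul, abs_mul, abs_of_nonneg ha0, abs_of_nonneg hb0]
        _ ≤ a*(C*τ1^α) + b*(C*τ2^α) := by gcongr
        _ = C*(a*τ1^α + b*τ2^α) := by ring
        _ ≤ C * τ^α := mul_le_mul_of_nonneg_left hconc hC0
    exact (div_le_iff₀ (Real.rpow_pos_of_pos hτ α)).mpr key

theorem stmt2 (n : ℕ) (hn : 1 ≤ n) (y : ℕ → ℝ) (α : ℝ) (hα0 : 0 < α) (hα1 : α < 1)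
    (x : ℝ → ℝ)
    (hx : ∀ t : ℝ, x t = y ⌊(n : ℝ) * t⌋₊ +
      ((n : ℝ) * t - ⌊(n : ℝ) * t⌋₊) * (y (⌊(n : ℝ) * t⌋₊ + 1) - y ⌊(n : ℝ) * t⌋₊)) :
    (⨆ (s : ℝ) (t : ℝ) (_ : 0 ≤ s) (_ : s < t) (_ : t ≤ 1), |x t - x s| / (t - s) ^ α)
      = ⨆ (i : ℕ) (j : ℕ) (_ : i < j) (_ : j ≤ n),
          |y j - y i| / (((j : ℝ) - (i : ℝ)) / (n : ℝ)) ^ α := by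
  have hN : (0:ℝ) < (n:ℝ) := by exact_mod_cast hn
  have hNne : (n:ℝ) ≠ 0 := hN.ne'
  -- x at grid points
  have hgrid : ∀ k : ℕ, x ((k:ℝ)/n) = y k := by
    intro k
    have h1 : (n:ℝ) * ((k:ℝ)/n) = (k:ℝ) := by field_simp
    rw [hx, h1, Nat.floor_natCast]
    simp
  -- affine formula on each cell
  have hcell : ∀ (k : ℕ) (t : ℝ), (k:ℝ)/n ≤ t → t ≤ ((k:ℝ)+1)/n →
      x t = y k + ((n:ℝ)*t - k) * (y (k+1) - y k) := by
    intro k t hkt htk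
    rcases lt_or_eq_of_le htk with hlt | heq
    · have hk1 : (k:ℝ) ≤ (n:ℝ)*t := by
        have := (div_le_iff₀ hN).mp hkt; linarith
      have hk2 : (n:ℝ)*t < (k:ℝ)+1 := by
        have := (lt_div_iff₀ hN).mp hlt; linarith
      have hfl : ⌊(n:ℝ)*t⌋₊ = k := by
        rw [Nat.floor_eq_iff (by linarith [Nat.cast_nonneg (α := ℝ) k] : (0:ℝ) ≤ (n:ℝ)*t)]
        exact ⟨hk1, by push_cast; linarith⟩
      rw [hx, hfl]
    · have hcast : ((k:ℝ)+1)/n = ((k+1 : ℕ):ℝ)/n := by push_cast; ring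
      subst heq
      rw [hcast, hgrid (k+1)]
      have h2 : (n:ℝ) * (((k+1:ℕ):ℝ)/n) = ((k+1:ℕ):ℝ) := by field_simp
      rw [h2]
      push_cast
      ring
  -- same cell estimate
  have hsame : ∀ (k : ℕ) (s t : ℝ), (k:ℝ)/n ≤ s → s < t → t ≤ ((k:ℝ)+1)/n →
      |x t - x s| / (t-s)^α ≤ |y (k+1) - y k| / ((((k+1:ℕ):ℝ) - ((k:ℕ):ℝ))/(n:ℝ))^α := by
    intro k s t hks hst htk
    have hst' : 0 < t - s := sub_pos.mpr hst
    have hts : t - s ≤ 1/(n:ℝ) := by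
      have h1 : ((k:ℝ)+1)/n - (k:ℝ)/n = 1/n := by ring
      linarith
    have hxt := hcell k t (le_trans hks hst.le) htk
    have hxs := hcell k s hks (le_trans hst.le htk)
    have hnum : x t - x s = (n:ℝ)*(t-s)*(y (k+1) - y k) := by rw [hxt, hxs]; ring
    have hcast : ((((k+1:ℕ)):ℝ) - ((k:ℕ):ℝ))/(n:ℝ) = 1/n := by push_cast; ring
    rw [hnum, hcast, abs_mul, abs_mul, abs_of_nonneg hN.le, abs_of_nonneg hst'.le]
    have hpow : (t-s)^((1:ℝ)-α) = (t-s)/(t-s)^α := by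
      rw [Real.rpow_sub hst', Real.rpow_one]
    have h1n : (0:ℝ) < 1/(n:ℝ) := by positivity
    have hpow2 : ((1:ℝ)/n)^((1:ℝ)-α) = (1/(n:ℝ))/(1/(n:ℝ))^α := by
      rw [Real.rpow_sub h1n, Real.rpow_one]
    have hmono : (t-s)^((1:ℝ)-α) ≤ ((1:ℝ)/n)^((1:ℝ)-α) :=
      Real.rpow_le_rpow hst'.le hts (by linarith)
    have e1 : (n:ℝ)*(t-s)*|y (k+1) - y k| / (t-s)^α = (n:ℝ)*|y (k+1) - y k| * ((t-s)^((1:ℝ)-α)) := by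
      rw [hpow]; ring
    have e2 : (n:ℝ)*|y (k+1) - y k| * (((1:ℝ)/n)^((1:ℝ)-α)) = |y (k+1) - y k| / ((1:ℝ)/n)^α := by
      rw [hpow2]
      field_simp
    rw [e1, ← e2]
    have habs : (0:ℝ) ≤ (n:ℝ)*|y (k+1) - y k| := by positivity
    exact mul_le_mul_of_nonneg_left hmono habs
  -- step 2: t already a grid point, move s to a grid point
  have hstep2 : ∀ (j : ℕ) (s : ℝ), 1 ≤ j → j ≤ n → 0 ≤ s → s < (j:ℝ)/n →
      ∃ i : ℕ, i < j ∧ |x ((j:ℝ)/n) - x s| / ((j:ℝ)/n - s)^α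
        ≤ |y j - y i| / (((j:ℝ) - (i:ℝ))/(n:ℝ))^α := by
    intro j s hj1 hjn hs0 hsj
    set l := ⌊(n:ℝ)*s⌋₊ with hldef
    have hls : (l:ℝ) ≤ (n:ℝ)*s := Nat.floor_le (by positivity)
    have hsl : (n:ℝ)*s < (l:ℝ)+1 := Nat.lt_floor_add_one _
    have hnsj : (n:ℝ)*s < (j:ℝ) := by
      have := (lt_div_iff₀ hN).mp hsj; linarith
    have hlj : l < j := by exact_mod_cast lt_of_le_of_lt hls hnsj
    have hlns : (l:ℝ)/n ≤ s := by rw [div_le_iff₀ hN]; linarith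
    rcases eq_or_lt_of_le (Nat.succ_le_of_lt hlj) with heq | hlt
    · -- adjacent cell: same-cell estimate
      have hj2 : j = l + 1 := heq.symm
      subst hj2
      refine ⟨l, hlj, ?_⟩
      have hcast : ((l+1:ℕ):ℝ) = (l:ℝ)+1 := by push_cast; ring
      exact hsame l s (((l+1:ℕ):ℝ)/n) hlns hsj (by rw [hcast])
    · -- strict: apply segment lemma in s
      have hlt' : (l:ℝ)+1 < (j:ℝ) := by exact_mod_cast hlt
      have hsub : s ≤ ((l:ℝ)+1)/n := le_of_lt (by rw [lt_div_iff₀ hN]; linarith)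
      have hxs := hcell l s hlns hsub
      set A := (n:ℝ)*(y (l+1) - y l) with hAdef
      set B := y j - y l - ((j:ℝ) - (l:ℝ))*(y (l+1) - y l) with hBdef
      have hnum : x ((j:ℝ)/n) - x s = A*((j:ℝ)/n - s) + B := by
        rw [hgrid j, hxs, hAdef, hBdef]; field_simp; ring
      have hτ1 : (0:ℝ) < ((j:ℝ) - ((l:ℝ)+1))/n := div_pos (by linarith) hN
      have h_r : ((j:ℝ) - ((l:ℝ)+1))/n ≤ (j:ℝ)/n - s := by
        have e : ((j:ℝ) - ((l:ℝ)+1))/n = (j:ℝ)/n - ((l:ℝ)+1)/n := by ring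
        linarith
      have h_l : (j:ℝ)/n - s ≤ ((j:ℝ) - (l:ℝ))/n := by
        have e : ((j:ℝ) - (l:ℝ))/n = (j:ℝ)/n - (l:ℝ)/n := by ring
        linarith
      have hseg := seg_lemma α hα0 hα1 A B _ _ _ hτ1 h_r h_l
      have ev1 : A*(((j:ℝ) - ((l:ℝ)+1))/n)+B = y j - y (l+1) := by
        rw [hAdef, hBdef]; field_simp; ring
      have ev2 : A*(((j:ℝ) - (l:ℝ))/n)+B = y j - y l := by
        rw [hAdef, hBdef]; field_simp; ring
      rw [ev1, ev2, ← hnum] at hseg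
      rcases max_cases (|y j - y (l+1)| / (((j:ℝ) - ((l:ℝ)+1))/n)^α)
          (|y j - y l| / (((j:ℝ) - (l:ℝ))/n)^α) with ⟨hm, _⟩ | ⟨hm, _⟩ <;> rw [hm] at hseg
      · refine ⟨l+1, hlt, ?_⟩
        convert hseg using 4
        push_cast; ring
      · exact ⟨l, hlj, hseg⟩
  -- key estimate: any chord quotient is dominated by a vertex pair quotient
  have hkey : ∀ s t : ℝ, 0 ≤ s → s < t → t ≤ 1 →
      ∃ i j : ℕ, i < j ∧ j ≤ n ∧ |x t - x s| / (t - s)^α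
        ≤ |y j - y i| / (((j:ℝ) - (i:ℝ))/(n:ℝ))^α := by
    intro s t hs0 hst ht1
    have ht0 : 0 < t := hs0.trans_lt hst
    have hnt0 : 0 < (n:ℝ)*t := mul_pos hN ht0
    set k := ⌈(n:ℝ)*t⌉₊ - 1 with hkdef
    have hck : ⌈(n:ℝ)*t⌉₊ = k+1 := by
      have := Nat.ceil_pos.mpr hnt0; omega
    have hkt : (k:ℝ) < (n:ℝ)*t := by
      have h := Nat.ceil_lt_add_one hnt0.le
      rw [hck] at h; push_cast at h; linarith
    have htk : (n:ℝ)*t ≤ (k:ℝ)+1 := by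
      have h := Nat.le_ceil ((n:ℝ)*t)
      rw [hck] at h; push_cast at h; linarith
    have hk1n : k+1 ≤ n := by
      have h1 : (n:ℝ)*t ≤ (n:ℝ) := by nlinarith
      have h2 : ⌈(n:ℝ)*t⌉₊ ≤ ⌈(n:ℝ)⌉₊ := Nat.ceil_le_ceil h1
      rw [Nat.ceil_natCast] at h2; omega
    have htk' : t ≤ ((k:ℝ)+1)/n := by rw [le_div_iff₀ hN]; linarith
    have hkt' : (k:ℝ)/n < t := by rw [div_lt_iff₀ hN]; linarith
    by_cases hcase : (k:ℝ)/n ≤ s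
    · refine ⟨k, k+1, Nat.lt_succ_self k, hk1n, ?_⟩
      have h := hsame k s t hcase hst htk'
      convert h using 4
      all_goals (push_cast; ring)
    · push_neg at hcase
      have hk1 : 1 ≤ k := by
        rcases Nat.eq_zero_or_pos k with h0 | h1
        · exfalso; rw [h0] at hcase; simp at hcase; linarith
        · exact h1
      set A := (n:ℝ)*(y (k+1) - y k) with hAdef
      set B := y k - x s + ((n:ℝ)*s - (k:ℝ))*(y (k+1) - y k) with hBdef
      have hkk1 : (k:ℝ)/n ≤ ((k:ℝ)+1)/n := div_le_div_of_nonneg_right (by linarith) hN.le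
      have hnum : ∀ u : ℝ, (k:ℝ)/n ≤ u → u ≤ ((k:ℝ)+1)/n → x u - x s = A*(u - s) + B := by
        intro u h1 h2
        rw [hcell k u h1 h2, hAdef, hBdef]; ring
      have hseg := seg_lemma α hα0 hα1 A B ((k:ℝ)/n - s) (((k:ℝ)+1)/n - s) (t - s)
        (by linarith) (by linarith) (by linarith)
      rw [← hnum t hkt'.le htk', ← hnum ((k:ℝ)/n) le_rfl hkk1,
        ← hnum (((k:ℝ)+1)/n) hkk1 le_rfl] at hseg
      rcases max_cases (|x ((k:ℝ)/n) - x s| / ((k:ℝ)/n - s)^α)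
          (|x (((k:ℝ)+1)/n) - x s| / (((k:ℝ)+1)/n - s)^α) with ⟨hm, _⟩ | ⟨hm, _⟩ <;>
        rw [hm] at hseg
      · obtain ⟨i, hik, hQ⟩ := hstep2 k s hk1 (by omega) hs0 hcase
        exact ⟨i, k, hik, by omega, hseg.trans hQ⟩
      · have hsk1 : s < ((k:ℝ)+1)/n := lt_of_lt_of_le hcase hkk1
        obtain ⟨i, hik, hQ⟩ := hstep2 (k+1) s (by omega) hk1n hs0
          (by convert hsk1 using 2; push_cast; ring)
        refine ⟨i, k+1, hik, hk1n, hseg.trans ?_⟩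
        convert hQ using 4 <;> push_cast <;> rfl
  -- global crude bound
  set MB := (n:ℝ)^α * ∑ p ∈ Finset.range (n+1), ∑ q ∈ Finset.range (n+1), |y p - y q| with hMBdef
  have hMB0 : 0 ≤ MB := by
    rw [hMBdef]
    exact mul_nonneg (Real.rpow_nonneg hN.le _)
      (Finset.sum_nonneg fun p _ => Finset.sum_nonneg fun q _ => abs_nonneg _)
  have hgC : ∀ i j : ℕ, i < j → j ≤ n →
      |y j - y i| / (((j:ℝ) - (i:ℝ))/(n:ℝ))^α ≤ MB := by
    intro i j hij hjn
    have hij1 : (1:ℝ) ≤ (j:ℝ) - (i:ℝ) := by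
      have : (i:ℝ)+1 ≤ (j:ℝ) := by exact_mod_cast hij
      linarith
    have hbase : (1:ℝ)/n ≤ ((j:ℝ)-(i:ℝ))/n := div_le_div_of_nonneg_right hij1 hN.le
    have hd1 : (0:ℝ) < (1:ℝ)/n := by positivity
    have h5 : ((1:ℝ)/n)^α ≤ (((j:ℝ)-(i:ℝ))/n)^α := Real.rpow_le_rpow hd1.le hbase hα0.le
    have h6 : (0:ℝ) < ((1:ℝ)/n)^α := Real.rpow_pos_of_pos hd1 α
    have step1 : |y j - y i| / (((j:ℝ)-(i:ℝ))/n)^α ≤ |y j - y i| / ((1:ℝ)/n)^α :=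
      div_le_div_of_nonneg_left (abs_nonneg _) h6 h5
    have step2 : |y j - y i| / ((1:ℝ)/n)^α = |y j - y i| * (n:ℝ)^α := by
      rw [Real.div_rpow (by norm_num) hN.le, Real.one_rpow, div_div_eq_mul_div, div_one]
    have hjm : j ∈ Finset.range (n+1) := Finset.mem_range.mpr (by omega)
    have him : i ∈ Finset.range (n+1) := Finset.mem_range.mpr (by omega)
    have hsum : |y j - y i| ≤ ∑ p ∈ Finset.range (n+1), ∑ q ∈ Finset.range (n+1), |y p - y q| :=
      calc |y j - y i| ≤ ∑ q ∈ Finset.range (n+1), |y j - y q| :=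
            Finset.single_le_sum (f := fun q => |y j - y q|) (fun q _ => abs_nonneg _) him
        _ ≤ ∑ p ∈ Finset.range (n+1), ∑ q ∈ Finset.range (n+1), |y p - y q| :=
            Finset.single_le_sum (f := fun p => ∑ q ∈ Finset.range (n+1), |y p - y q|)
              (fun p _ => Finset.sum_nonneg fun q _ => abs_nonneg _) hjm
    rw [hMBdef]
    calc |y j - y i| / (((j:ℝ)-(i:ℝ))/n)^α ≤ |y j - y i| * (n:ℝ)^α := step2 ▸ step1
      _ ≤ (∑ p ∈ Finset.range (n+1), ∑ q ∈ Finset.range (n+1), |y p - y q|) * (n:ℝ)^α :=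
          mul_le_mul_of_nonneg_right hsum (Real.rpow_nonneg hN.le _)
      _ = (n:ℝ)^α * ∑ p ∈ Finset.range (n+1), ∑ q ∈ Finset.range (n+1), |y p - y q| :=
          mul_comm _ _
  have hQMB : ∀ s t : ℝ, 0 ≤ s → s < t → t ≤ 1 → |x t - x s| / (t - s)^α ≤ MB := by
    intro s t hs hst ht
    obtain ⟨i, j, hij, hjn, hQ⟩ := hkey s t hs hst ht
    exact hQ.trans (hgC i j hij hjn)
  have hpropB : ∀ s t : ℝ,
      (⨆ (_ : 0 ≤ s), ⨆ (_ : s < t), ⨆ (_ : t ≤ 1), |x t - x s| / (t - s)^α) ≤ MB :=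
    fun s t => Real.iSup_le (fun hs => Real.iSup_le (fun hst => Real.iSup_le
      (fun ht => hQMB s t hs hst ht) hMB0) hMB0) hMB0
  have bdd_t : ∀ s : ℝ, BddAbove (Set.range fun t =>
      ⨆ (_ : 0 ≤ s), ⨆ (_ : s < t), ⨆ (_ : t ≤ 1), |x t - x s| / (t - s)^α) :=
    fun s => ⟨MB, by rintro v ⟨t, rfl⟩; exact hpropB s t⟩
  have bdd_s : BddAbove (Set.range fun s => ⨆ t, ⨆ (_ : 0 ≤ s), ⨆ (_ : s < t),
      ⨆ (_ : t ≤ 1), |x t - x s| / (t - s)^α) :=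
    ⟨MB, by rintro v ⟨s, rfl⟩; exact Real.iSup_le (fun t => hpropB s t) hMB0⟩
  have hgpropB : ∀ i j : ℕ, (⨆ (_ : i < j), ⨆ (_ : j ≤ n),
      |y j - y i| / (((j:ℝ)-(i:ℝ))/(n:ℝ))^α) ≤ MB :=
    fun i j => Real.iSup_le (fun hij => Real.iSup_le (fun hjn => hgC i j hij hjn) hMB0) hMB0
  have bdd_j : ∀ i : ℕ, BddAbove (Set.range fun j => ⨆ (_ : i < j), ⨆ (_ : j ≤ n),
      |y j - y i| / (((j:ℝ)-(i:ℝ))/(n:ℝ))^α) :=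
    fun i => ⟨MB, by rintro v ⟨j, rfl⟩; exact hgpropB i j⟩
  have bdd_i : BddAbove (Set.range fun i => ⨆ j, ⨆ (_ : i < j), ⨆ (_ : j ≤ n),
      |y j - y i| / (((j:ℝ)-(i:ℝ))/(n:ℝ))^α) :=
    ⟨MB, by rintro v ⟨i, rfl⟩; exact Real.iSup_le (fun j => hgpropB i j) hMB0⟩
  have hgM : ∀ i j : ℕ, i < j → j ≤ n → |y j - y i| / (((j:ℝ)-(i:ℝ))/(n:ℝ))^α ≤
      ⨆ (i : ℕ) (j : ℕ) (_ : i < j) (_ : j ≤ n), |y j - y i| / (((j:ℝ)-(i:ℝ))/(n:ℝ))^α := by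
    intro i j hij hjn
    have e : (⨆ (_ : i < j), ⨆ (_ : j ≤ n), |y j - y i| / (((j:ℝ)-(i:ℝ))/(n:ℝ))^α)
        = |y j - y i| / (((j:ℝ)-(i:ℝ))/(n:ℝ))^α := by rw [ciSup_pos hij, ciSup_pos hjn]
    calc |y j - y i| / (((j:ℝ)-(i:ℝ))/(n:ℝ))^α = _ := e.symm
      _ ≤ ⨆ (j' : ℕ) (_ : i < j') (_ : j' ≤ n), |y j' - y i| / (((j':ℝ)-(i:ℝ))/(n:ℝ))^α :=
          le_ciSup (bdd_j i) j
      _ ≤ _ := le_ciSup bdd_i i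
  have hgnn : ∀ i j : ℕ, i < j → 0 ≤ |y j - y i| / (((j:ℝ)-(i:ℝ))/(n:ℝ))^α := by
    intro i j hij
    have h0 : (i:ℝ) ≤ (j:ℝ) := by exact_mod_cast hij.le
    have h1 : (0:ℝ) ≤ ((j:ℝ)-(i:ℝ))/n := div_nonneg (by linarith) hN.le
    exact div_nonneg (abs_nonneg _) (Real.rpow_nonneg h1 _)
  have hM0 : (0:ℝ) ≤ ⨆ (i : ℕ) (j : ℕ) (_ : i < j) (_ : j ≤ n),
      |y j - y i| / (((j:ℝ)-(i:ℝ))/(n:ℝ))^α :=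
    le_trans (hgnn 0 n (by omega)) (hgM 0 n (by omega) le_rfl)
  have hQM : ∀ s t : ℝ, 0 ≤ s → s < t → t ≤ 1 → |x t - x s| / (t - s)^α ≤
      ⨆ (i : ℕ) (j : ℕ) (_ : i < j) (_ : j ≤ n), |y j - y i| / (((j:ℝ)-(i:ℝ))/(n:ℝ))^α := by
    intro s t hs hst ht
    obtain ⟨i, j, hij, hjn, hQ⟩ := hkey s t hs hst ht
    exact hQ.trans (hgM i j hij hjn)
  have hvertex : ∀ i j : ℕ, i < j → j ≤ n →
      |y j - y i| / (((j:ℝ)-(i:ℝ))/(n:ℝ))^α ≤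
      ⨆ (s : ℝ) (t : ℝ) (_ : 0 ≤ s) (_ : s < t) (_ : t ≤ 1), |x t - x s| / (t - s)^α := by
    intro i j hij hjn
    have h1 : (0:ℝ) ≤ (i:ℝ)/n := by positivity
    have h2 : (i:ℝ)/n < (j:ℝ)/n := by
      have hij' : (i:ℝ) < (j:ℝ) := by exact_mod_cast hij
      rw [div_lt_div_iff₀ hN hN]
      nlinarith
    have h3 : (j:ℝ)/n ≤ 1 := by rw [div_le_one hN]; exact_mod_cast hjn
    have hq : |x ((j:ℝ)/n) - x ((i:ℝ)/n)| / ((j:ℝ)/n - (i:ℝ)/n)^α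
        = |y j - y i| / (((j:ℝ)-(i:ℝ))/(n:ℝ))^α := by
      rw [hgrid i, hgrid j, show (j:ℝ)/n - (i:ℝ)/n = ((j:ℝ)-(i:ℝ))/(n:ℝ) from by ring]
    rw [← hq]
    have e : (⨆ (_ : (0:ℝ) ≤ (i:ℝ)/n), ⨆ (_ : (i:ℝ)/n < (j:ℝ)/n), ⨆ (_ : (j:ℝ)/n ≤ 1),
        |x ((j:ℝ)/n) - x ((i:ℝ)/n)| / ((j:ℝ)/n - (i:ℝ)/n)^α)
        = |x ((j:ℝ)/n) - x ((i:ℝ)/n)| / ((j:ℝ)/n - (i:ℝ)/n)^α := by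
      rw [ciSup_pos h1, ciSup_pos h2, ciSup_pos h3]
    calc |x ((j:ℝ)/n) - x ((i:ℝ)/n)| / ((j:ℝ)/n - (i:ℝ)/n)^α = _ := e.symm
      _ ≤ ⨆ (t : ℝ) (_ : (0:ℝ) ≤ (i:ℝ)/n) (_ : (i:ℝ)/n < t) (_ : t ≤ 1),
            |x t - x ((i:ℝ)/n)| / (t - (i:ℝ)/n)^α := le_ciSup (bdd_t ((i:ℝ)/n)) ((j:ℝ)/n)
      _ ≤ _ := le_ciSup bdd_s ((i:ℝ)/n)
  have hL0 : (0:ℝ) ≤ ⨆ (s : ℝ) (t : ℝ) (_ : 0 ≤ s) (_ : s < t) (_ : t ≤ 1),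
      |x t - x s| / (t - s)^α :=
    le_trans (hgnn 0 n (by omega)) (hvertex 0 n (by omega) le_rfl)
  refine le_antisymm ?_ ?_
  · exact Real.iSup_le (fun s => Real.iSup_le (fun t => Real.iSup_le (fun hs =>
      Real.iSup_le (fun hst => Real.iSup_le (fun ht => hQM s t hs hst ht) hM0) hM0) hM0) hM0) hM0
  · exact Real.iSup_le (fun i => Real.iSup_le (fun j => Real.iSup_le (fun hij =>
      Real.iSup_le (fun hjn => hvertex i j hij hjn) hL0) hL0) hL0) hL0
end

section
/- For each positive integer n, each function h : Ω → ℝ and each measure-preserving map T : Ω → Ω, the following pointwise inequality holds: M(n, h, T) ≤ 6 · max_{0 ≤ k ≤ n} |h ∘ T^k| + 2^{-(1/2 − 1/p)} · M([n/2], h + h∘T, T²), where M(n, f, T) := max_{0 ≤ i < j ≤ n} |S_j(T,f) − S_i(T,f)| / (j−i)^{1/2−1/p} and S_n(T,f) = Σ_{j=0}^{n−1} f ∘ T^j. -/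
open MeasureTheory

/-- Birkhoff sum `S_n(T,h)(x) = Σ_{j=0}^{n-1} h(T^j x)`. -/
noncomputable def birkSum {Ω : Type*} (T : Ω → Ω) (h : Ω → ℝ) (n : ℕ) (x : Ω) : ℝ :=
  ∑ j ∈ Finset.range n, h (T^[j] x)

/-- `M(n,h,T)(x) = max_{0 ≤ i < j ≤ n} |S_j(T,h)(x) - S_i(T,h)(x)| / (j-i)^{1/2-1/p}`. -/
noncomputable def Mmax {Ω : Type*} (p : ℝ) (T : Ω → Ω) (h : Ω → ℝ) (n : ℕ) (x : Ω) : ℝ :=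
  ⨆ (i : ℕ) (j : ℕ) (_ : i < j) (_ : j ≤ n),
    |birkSum T h j x - birkSum T h i x| / ((j : ℝ) - (i : ℝ)) ^ (1 / 2 - 1 / p)

lemma birkSum_sub {Ω : Type*} (T : Ω → Ω) (h : Ω → ℝ) {i j : ℕ} (hij : i ≤ j) (x : Ω) :
    birkSum T h j x - birkSum T h i x = ∑ k ∈ Finset.Ico i j, h (T^[k] x) :=
  (Finset.sum_Ico_eq_sub _ hij).symm

lemma Mmax_nonneg {Ω : Type*} (p : ℝ) (T : Ω → Ω) (h : Ω → ℝ) (n : ℕ) (x : Ω) :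
    0 ≤ Mmax p T h n x := by
  refine Real.iSup_nonneg fun i => Real.iSup_nonneg fun j => Real.iSup_nonneg fun hij =>
    Real.iSup_nonneg fun _ => div_nonneg (abs_nonneg _) (Real.rpow_nonneg ?_ _)
  have : (i : ℝ) < (j : ℝ) := by exact_mod_cast hij
  linarith

lemma one_le_gap_rpow {p : ℝ} (hp : 2 < p) {i j : ℕ} (hij : i < j) :
    (1 : ℝ) ≤ ((j : ℝ) - (i : ℝ)) ^ (1 / 2 - 1 / p : ℝ) := by
  have ha0 : (0 : ℝ) ≤ 1 / 2 - 1 / p := by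
    have : 1 / p < 1 / 2 := one_div_lt_one_div_of_lt two_pos hp
    linarith
  have h1 : (1 : ℝ) ≤ (j : ℝ) - (i : ℝ) := by
    have : (i : ℝ) + 1 ≤ (j : ℝ) := by exact_mod_cast hij
    linarith
  exact Real.one_le_rpow h1 ha0

lemma le_Mmax {Ω : Type*} {p : ℝ} (hp : 2 < p) (S : Ω → Ω) (g : Ω → ℝ) (m : ℕ) (x : Ω)
    {i j : ℕ} (hij : i < j) (hjm : j ≤ m) :
    |birkSum S g j x - birkSum S g i x| / ((j : ℝ) - (i : ℝ)) ^ (1 / 2 - 1 / p : ℝ)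
      ≤ Mmax p S g m x := by
  set C := ∑ k ∈ Finset.range m, |g (S^[k] x)| with hC
  have hC0 : 0 ≤ C := Finset.sum_nonneg fun _ _ => abs_nonneg _
  have hterm : ∀ i' j' : ℕ, i' < j' → j' ≤ m →
      |birkSum S g j' x - birkSum S g i' x| / ((j' : ℝ) - (i' : ℝ)) ^ (1 / 2 - 1 / p : ℝ) ≤ C := by
    intro i' j' h1 h2
    calc |birkSum S g j' x - birkSum S g i' x| / ((j' : ℝ) - (i' : ℝ)) ^ (1 / 2 - 1 / p : ℝ)
        ≤ |birkSum S g j' x - birkSum S g i' x| :=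
          div_le_self (abs_nonneg _) (one_le_gap_rpow hp h1)
      _ = |∑ k ∈ Finset.Ico i' j', g (S^[k] x)| := by rw [birkSum_sub S g h1.le]
      _ ≤ ∑ k ∈ Finset.Ico i' j', |g (S^[k] x)| := Finset.abs_sum_le_sum_abs _ _
      _ ≤ C := Finset.sum_le_sum_of_subset_of_nonneg
          (fun k hk => Finset.mem_range.mpr (lt_of_lt_of_le (Finset.mem_Ico.mp hk).2 h2))
          (fun _ _ _ => abs_nonneg _)
  set G : ℕ → ℕ → ℝ := fun i' j' => ⨆ (_ : i' < j') (_ : j' ≤ m),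
    |birkSum S g j' x - birkSum S g i' x| / ((j' : ℝ) - (i' : ℝ)) ^ (1 / 2 - 1 / p : ℝ) with hGdef
  have hG : ∀ i' j', G i' j' ≤ C := fun i' j' =>
    Real.iSup_le (fun h1 => Real.iSup_le (fun h2 => hterm i' j' h1 h2) hC0) hC0
  set F : ℕ → ℝ := fun i' => ⨆ j', G i' j' with hFdef
  have hF : ∀ i', F i' ≤ C := fun i' => Real.iSup_le (fun j' => hG i' j') hC0
  have hBG : BddAbove (Set.range (G i)) := ⟨C, by rintro y ⟨j', rfl⟩; exact hG i j'⟩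
  have hBF : BddAbove (Set.range F) := ⟨C, by rintro y ⟨i', rfl⟩; exact hF i'⟩
  have step1 : |birkSum S g j x - birkSum S g i x| / ((j : ℝ) - (i : ℝ)) ^ (1 / 2 - 1 / p : ℝ)
      = G i j := by
    haveI : Nonempty (i < j) := ⟨hij⟩
    haveI : Nonempty (j ≤ m) := ⟨hjm⟩
    rw [hGdef]; simp only [ciSup_const]
  rw [step1]
  calc G i j ≤ F i := le_ciSup hBG j
    _ ≤ Mmax p S g m x := le_ciSup hBF i

lemma birkSum_double {Ω : Type*} (T : Ω → Ω) (h : Ω → ℝ) (k : ℕ) (x : Ω) :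
    birkSum (T ∘ T) (fun y => h y + h (T y)) k x = birkSum T h (2 * k) x := by
  induction k with
  | zero => simp [birkSum]
  | succ k ih =>
    have hit : (T ∘ T)^[k] x = T^[2 * k] x := by
      rw [Function.iterate_mul]
      rfl
    have h2 : 2 * (k + 1) = (2 * k + 1) + 1 := by ring
    unfold birkSum at ih ⊢
    rw [Finset.sum_range_succ, ih, h2, Finset.sum_range_succ, Finset.sum_range_succ, hit,
      Function.iterate_succ_apply' T (2 * k) x]
    ring

theorem stmt3 {Ω : Type*} [MeasurableSpace Ω] (μ : Measure Ω) [IsProbabilityMeasure μ]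
    (T : Ω → Ω) (hT : MeasurePreserving T μ μ) (p : ℝ) (hp : 2 < p)
    (h : Ω → ℝ) (hmeas : Measurable h) (n : ℕ) (hn : 1 ≤ n) (x : Ω) :
    Mmax p T h n x ≤
      6 * ((Finset.range (n + 1)).sup' (Finset.nonempty_range_iff.mpr (Nat.succ_ne_zero n))
          fun k => |h (T^[k] x)|)
        + 2 ^ (-(1 / 2 - 1 / p) : ℝ) *
          Mmax p (T ∘ T) (fun y => h y + h (T y)) (n / 2) x := by
  have ha0 : (0 : ℝ) ≤ 1 / 2 - 1 / p := by
    have : 1 / p < 1 / 2 := one_div_lt_one_div_of_lt two_pos hp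
    linarith
  set a : ℝ := 1 / 2 - 1 / p with ha_def
  set H := (Finset.range (n + 1)).sup' (Finset.nonempty_range_iff.mpr (Nat.succ_ne_zero n))
      (fun k => |h (T^[k] x)|) with hHdef
  have hsup : ∀ k ∈ Finset.range (n + 1), |h (T^[k] x)| ≤ H := by
    intro k hk
    rw [hHdef]
    exact Finset.le_sup' (fun k => |h (T^[k] x)|) hk
  have hH0 : 0 ≤ H :=
    le_trans (abs_nonneg _) (hsup 0 (Finset.mem_range.mpr (Nat.succ_pos n)))
  set M2 := Mmax p (T ∘ T) (fun y => h y + h (T y)) (n / 2) x with hM2def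
  have hM2 : 0 ≤ M2 := Mmax_nonneg _ _ _ _ _
  have hpow2 : (0 : ℝ) < 2 ^ (-a : ℝ) := Real.rpow_pos_of_pos two_pos _
  have hRHS : 0 ≤ 6 * H + 2 ^ (-a : ℝ) * M2 := by positivity
  -- sup over k ≤ n bound
  have key : ∀ i j : ℕ, i ≤ j → j ≤ n →
      |birkSum T h j x - birkSum T h i x| ≤ ((j : ℝ) - (i : ℝ)) * H := by
    intro i j hij hjn
    rw [birkSum_sub T h hij]
    calc |∑ k ∈ Finset.Ico i j, h (T^[k] x)|
        ≤ ∑ k ∈ Finset.Ico i j, |h (T^[k] x)| := Finset.abs_sum_le_sum_abs _ _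
      _ ≤ ∑ _k ∈ Finset.Ico i j, H := Finset.sum_le_sum (fun k hk => by
          refine hsup k (Finset.mem_range.mpr ?_)
          have := (Finset.mem_Ico.mp hk).2
          omega)
      _ = ((j - i : ℕ) : ℝ) * H := by rw [Finset.sum_const, Nat.card_Ico, nsmul_eq_mul]
      _ = ((j : ℝ) - (i : ℝ)) * H := by rw [Nat.cast_sub hij]
  unfold Mmax
  simp only [← ha_def]
  refine Real.iSup_le (fun i => Real.iSup_le (fun j => Real.iSup_le (fun hij =>
    Real.iSup_le (fun hjn => ?_) hRHS) hRHS) hRHS) hRHS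
  have hP1 : (1 : ℝ) ≤ ((j : ℝ) - (i : ℝ)) ^ (a : ℝ) := one_le_gap_rpow hp hij
  have hP0 : (0 : ℝ) < ((j : ℝ) - (i : ℝ)) ^ (a : ℝ) := lt_of_lt_of_le one_pos hP1
  have hijR : (i : ℝ) + 1 ≤ (j : ℝ) := by exact_mod_cast hij
  by_cases hsmall : j ≤ i + 2
  · -- small gap
    have h1 : |birkSum T h j x - birkSum T h i x| / ((j : ℝ) - (i : ℝ)) ^ (a : ℝ)
        ≤ |birkSum T h j x - birkSum T h i x| := div_le_self (abs_nonneg _) hP1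
    have h2 : |birkSum T h j x - birkSum T h i x| ≤ 2 * H := by
      have hk := key i j hij.le hjn
      have hle2 : (j : ℝ) - (i : ℝ) ≤ 2 := by
        have : (j : ℝ) ≤ (i : ℝ) + 2 := by exact_mod_cast hsmall
        linarith
      nlinarith
    nlinarith
  · push_neg at hsmall
    set i' := (i + 1) / 2 with hi'
    set j' := j / 2 with hj'
    have hfacts : i ≤ 2 * i' ∧ 2 * i' ≤ i + 1 ∧ 2 * j' ≤ j ∧ j ≤ 2 * j' + 1 ∧ i' < j' ∧
        j' ≤ n / 2 ∧ 2 * i' ≤ n ∧ 2 * j' ≤ n := by omega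
    obtain ⟨f1, f2, f3, f4, f5, f6, f7, f8⟩ := hfacts
    have e1 : |birkSum T h (2 * i') x - birkSum T h i x| ≤ H := by
      have hk := key i (2 * i') f1 f7
      have c1 : ((2 * i' : ℕ) : ℝ) ≤ (i : ℝ) + 1 := by exact_mod_cast f2
      nlinarith
    have e2 : |birkSum T h j x - birkSum T h (2 * j') x| ≤ H := by
      have hk := key (2 * j') j f3 hjn
      have c1 : ((j : ℕ) : ℝ) ≤ ((2 * j' : ℕ) : ℝ) + 1 := by exact_mod_cast f4
      nlinarith
    have tri : |birkSum T h j x - birkSum T h i x| ≤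
        |birkSum T h j x - birkSum T h (2 * j') x|
        + |birkSum T h (2 * j') x - birkSum T h (2 * i') x|
        + |birkSum T h (2 * i') x - birkSum T h i x| := by
      have t1 := abs_sub_le (birkSum T h j x) (birkSum T h (2 * j') x) (birkSum T h i x)
      have t2 := abs_sub_le (birkSum T h (2 * j') x) (birkSum T h (2 * i') x) (birkSum T h i x)
      linarith
    -- connect to the doubled system
    have hD : |birkSum T h (2 * j') x - birkSum T h (2 * i') x|
        / ((j' : ℝ) - (i' : ℝ)) ^ (a : ℝ) ≤ M2 := by
      have := le_Mmax hp (T ∘ T) (fun y => h y + h (T y)) (n / 2) x f5 f6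
      rw [birkSum_double, birkSum_double, ← ha_def, ← hM2def] at this
      exact this
    have hQ0 : (0 : ℝ) < ((j' : ℝ) - (i' : ℝ)) ^ (a : ℝ) := by
      have := one_le_gap_rpow hp f5
      rw [← ha_def] at this
      linarith
    have hDle : |birkSum T h (2 * j') x - birkSum T h (2 * i') x|
        ≤ M2 * ((j' : ℝ) - (i' : ℝ)) ^ (a : ℝ) := by
      rw [div_le_iff₀ hQ0] at hD
      linarith
    have hQ : ((j' : ℝ) - (i' : ℝ)) ^ (a : ℝ)
        ≤ 2 ^ (-a : ℝ) * ((j : ℝ) - (i : ℝ)) ^ (a : ℝ) := by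
      have c1 : 2 * (j' : ℝ) ≤ (j : ℝ) := by exact_mod_cast f3
      have c2 : (i : ℝ) ≤ 2 * (i' : ℝ) := by exact_mod_cast f1
      have hbase : (j' : ℝ) - (i' : ℝ) ≤ ((j : ℝ) - (i : ℝ)) / 2 := by linarith
      have h0 : (0 : ℝ) ≤ (j' : ℝ) - (i' : ℝ) := by
        have : (i' : ℝ) < (j' : ℝ) := by exact_mod_cast f5
        linarith
      calc ((j' : ℝ) - (i' : ℝ)) ^ (a : ℝ)
          ≤ (((j : ℝ) - (i : ℝ)) / 2) ^ (a : ℝ) := Real.rpow_le_rpow h0 hbase ha0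
        _ = ((j : ℝ) - (i : ℝ)) ^ (a : ℝ) / 2 ^ (a : ℝ) := by
            rw [Real.div_rpow (by linarith : (0:ℝ) ≤ (j : ℝ) - (i : ℝ)) (by norm_num : (0:ℝ) ≤ 2)]
        _ = 2 ^ (-a : ℝ) * ((j : ℝ) - (i : ℝ)) ^ (a : ℝ) := by
            rw [Real.rpow_neg (by norm_num : (0:ℝ) ≤ 2)]
            ring
    have hfin : |birkSum T h j x - birkSum T h i x|
        ≤ 2 * H + M2 * (2 ^ (-a : ℝ) * ((j : ℝ) - (i : ℝ)) ^ (a : ℝ)) := by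
      have := mul_le_mul_of_nonneg_left hQ hM2
      linarith
    rw [div_le_iff₀ hP0]
    have h6 : 6 * H * 1 ≤ 6 * H * ((j : ℝ) - (i : ℝ)) ^ (a : ℝ) :=
      mul_le_mul_of_nonneg_left hP1 (by linarith)
    have expand : (6 * H + 2 ^ (-a : ℝ) * M2) * ((j : ℝ) - (i : ℝ)) ^ (a : ℝ)
        = 6 * H * ((j : ℝ) - (i : ℝ)) ^ (a : ℝ)
          + M2 * (2 ^ (-a : ℝ) * ((j : ℝ) - (i : ℝ)) ^ (a : ℝ)) := by ring
    linarith
end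

section
/- Let M be a sub-σ-algebra with TM ⊂ M and P_T f = U^{−1}f − E[U^{−1}f | M] on H = {f ∈ L^p : E[f|M] = 0}. Then P_T is power bounded on H with constant at most 2: for each f ∈ H and each k ≥ 1, ‖P_T^k f‖_p ≤ 2 ‖f‖_p. -/
open MeasureTheory Real Filter
open scoped ENNReal

lemma tangent_nonneg {p a y : ℝ} (hp : 1 ≤ p) (ha : 0 < a) (hy : 0 ≤ y) :
    a ^ p + p * a ^ (p - 1) * (y - a) ≤ y ^ p := by
  have hs : (-1 : ℝ) ≤ y / a - 1 := by
    have : 0 ≤ y / a := div_nonneg hy ha.le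
    linarith
  have hB := one_add_mul_self_le_rpow_one_add hs hp
  rw [add_sub_cancel] at hB
  have hap : (0:ℝ) < a ^ p := rpow_pos_of_pos ha p
  have h1 : (y / a) ^ p = y ^ p / a ^ p := div_rpow hy ha.le p
  rw [h1] at hB
  have h2 : (1 + p * (y / a - 1)) * a ^ p ≤ y ^ p := by
    calc (1 + p * (y / a - 1)) * a ^ p ≤ (y ^ p / a ^ p) * a ^ p :=
        mul_le_mul_of_nonneg_right hB hap.le
      _ = y ^ p := div_mul_cancel₀ _ hap.ne'
  have h3 : a ^ (p - 1) = a ^ p / a := by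
    rw [rpow_sub ha, rpow_one]
  calc a ^ p + p * a ^ (p - 1) * (y - a)
      = (1 + p * (y / a - 1)) * a ^ p := by
        rw [h3]; field_simp
    _ ≤ y ^ p := h2

lemma condexp_contract {Ω : Type*} [m0 : MeasurableSpace Ω] (μ : Measure Ω)
    [IsProbabilityMeasure μ] (m : MeasurableSpace Ω) (hm : m ≤ m0)
    (p : ℝ) (hp : 1 ≤ p) (f : Ω → ℝ) (hf : MemLp f (ENNReal.ofReal p) μ) :
    eLpNorm (μ[f|m]) (ENNReal.ofReal p) μ ≤ eLpNorm f (ENNReal.ofReal p) μ := by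
  haveI : IsFiniteMeasure (μ.trim hm) := isFiniteMeasure_trim hm
  have hp0 : (0:ℝ) < p := lt_of_lt_of_le one_pos hp
  have hq0 : ENNReal.ofReal p ≠ 0 := by
    simp [ENNReal.ofReal_eq_zero, not_le, hp0]
  have hqt : ENNReal.ofReal p ≠ ⊤ := ENNReal.ofReal_ne_top
  have hqr : (ENNReal.ofReal p).toReal = p := ENNReal.toReal_ofReal hp0.le
  have hintf : Integrable f μ := hf.integrable (by
    rw [← ENNReal.ofReal_one]; exact ENNReal.ofReal_le_ofReal hp)
  have hfp : Integrable (fun x => |f x| ^ p) μ := by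
    have := hf.integrable_norm_rpow hq0 hqt
    simpa [hqr, Real.norm_eq_abs] using this
  set H := μ[(fun x => |f x|)|m] with hH
  set G := μ[(fun x => |f x| ^ p)|m] with hG
  have hHnn : 0 ≤ᵐ[μ] H := condExp_nonneg (Eventually.of_forall fun x => abs_nonneg _)
  have hGnn : 0 ≤ᵐ[μ] G := condExp_nonneg (Eventually.of_forall fun x => rpow_nonneg (abs_nonneg _) p)
  -- |condexp f| ≤ H a.e.
  have habs : ∀ᵐ x ∂μ, |(μ[f|m]) x| ≤ H x := by
    have h1 : μ[f|m] ≤ᵐ[μ] H :=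
      condExp_mono hintf hintf.abs (Eventually.of_forall fun x => le_abs_self _)
    have h2 : μ[-f|m] ≤ᵐ[μ] H :=
      condExp_mono hintf.neg hintf.abs (Eventually.of_forall fun x => by simpa using neg_le_abs (f x))
    filter_upwards [h1, h2, condExp_neg (μ := μ) (m := m) f] with x e1 e2 e3
    rw [abs_le]
    constructor
    · have h4 := e2; rw [e3] at h4; simp only [Pi.neg_apply] at h4; linarith
    · exact e1
  -- tangent inequalities at positive rationals
  have hq : ∀ q : ℚ, ∀ᵐ x ∂μ, 0 < (q:ℝ) →
      (q:ℝ) ^ p + p * (q:ℝ) ^ (p - 1) * (H x - q) ≤ G x := by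
    intro q
    by_cases hqpos : 0 < (q:ℝ)
    · set c := p * (q:ℝ) ^ (p - 1) with hc
      set d := (q:ℝ) ^ p - c * q with hd
      have haff : Integrable (fun x => c * |f x| + d) μ :=
        (hintf.abs.const_mul c).add (integrable_const d)
      have hle : (fun x => c * |f x| + d) ≤ᵐ[μ] (fun x => |f x| ^ p) := by
        refine Eventually.of_forall fun x => ?_
        have := tangent_nonneg (a := (q:ℝ)) (y := |f x|) hp hqpos (abs_nonneg _)
        simp only [hc, hd]; nlinarith [this]
      have hmono := condExp_mono (m := m) haff hfp hle
      have heq : μ[(fun x => c * |f x| + d)|m] =ᵐ[μ] fun x => c * H x + d := by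
        have e1 := condExp_add (μ := μ) (m := m) (hintf.abs.const_mul c) (integrable_const d)
        have e2 : μ[(fun x => c * |f x|)|m] =ᵐ[μ] fun x => c * H x := by
          have := condExp_smul (μ := μ) (m := m) c (fun x => |f x|)
          simpa [Pi.smul_def, smul_eq_mul] using this
        have e3 : μ[(fun _ : Ω => d)|m] = fun _ => d := condExp_const hm d
        calc μ[(fun x => c * |f x| + d)|m]
            =ᵐ[μ] μ[(fun x => c * |f x|)|m] + μ[(fun _ => d)|m] := e1
          _ =ᵐ[μ] fun x => c * H x + d := by
              rw [e3]; filter_upwards [e2] with x e; simp [e]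
      filter_upwards [hmono, heq] with x h1 h2 _
      have : c * H x + d ≤ G x := by rw [← h2]; exact h1
      simp only [hc, hd] at this ⊢; nlinarith [this]
    · filter_upwards with x h; exact absurd h hqpos
  have hkey : ∀ᵐ x ∂μ, |(μ[f|m]) x| ^ p ≤ G x := by
    rw [← ae_all_iff] at hq
    filter_upwards [hq, habs, hHnn, hGnn] with x hx habsx hHx hGx
    simp only [Pi.zero_apply] at hHx hGx
    have hHp : H x ^ p ≤ G x := by
      rcases eq_or_lt_of_le hHx with h0 | hpos
      · rw [← h0, Real.zero_rpow hp0.ne']; exact hGx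
      · -- continuity argument
        set y := H x with hy
        have hcont : ContinuousAt (fun a : ℝ => a ^ p + p * a ^ (p - 1) * (y - a)) y := by
          have h1 : ContinuousAt (fun a : ℝ => a ^ p) y :=
            Real.continuousAt_rpow_const y p (Or.inl hpos.ne')
          have h2 : ContinuousAt (fun a : ℝ => a ^ (p - 1)) y :=
            Real.continuousAt_rpow_const y (p - 1) (Or.inl hpos.ne')
          exact h1.add (((continuousAt_const.mul h2).mul
            (continuousAt_const.sub continuousAt_id)))
        refine le_of_forall_pos_le_add fun ε hε => ?_
        have := Metric.continuousAt_iff.mp hcont ε hε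
        obtain ⟨δ, hδ, hδ'⟩ := this
        obtain ⟨r, hr⟩ := exists_rat_near y (lt_min hδ hpos)
        have hry : |y - r| < δ := lt_of_lt_of_le hr (min_le_left _ _)
        have hrpos : 0 < (r:ℝ) := by
          have : |y - r| < y := lt_of_lt_of_le hr (min_le_right _ _)
          rw [abs_lt] at this; linarith [this.2]
        have hclose := hδ' (show dist (r:ℝ) y < δ by
          rw [Real.dist_eq, abs_sub_comm]; exact hry)
        rw [Real.dist_eq] at hclose
        have hz : p * y ^ (p - 1) * (y - y) = 0 := by ring
        have hqx := hx r hrpos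
        have h6 := abs_lt.mp hclose
        linarith [h6.1, h6.2, hqx]
    calc |(μ[f|m]) x| ^ p ≤ H x ^ p :=
        Real.rpow_le_rpow (abs_nonneg _) habsx hp0.le
      _ ≤ G x := hHp
  -- now compare lintegrals
  have hGint : Integrable G μ := integrable_condExp
  have hlin : ∫⁻ x, ‖(μ[f|m]) x‖₊ ^ p ∂μ ≤ ∫⁻ x, ‖f x‖₊ ^ p ∂μ := by
    have e1 : ∫⁻ x, (‖(μ[f|m]) x‖₊ : ℝ≥0∞) ^ p ∂μ = ∫⁻ x, ENNReal.ofReal (|(μ[f|m]) x| ^ p) ∂μ := by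
      refine lintegral_congr fun x => ?_
      rw [← enorm_eq_nnnorm, ← ofReal_norm, Real.norm_eq_abs,
        ENNReal.ofReal_rpow_of_nonneg (abs_nonneg _) hp0.le]
    have e2 : ∫⁻ x, (‖f x‖₊ : ℝ≥0∞) ^ p ∂μ = ∫⁻ x, ENNReal.ofReal (|f x| ^ p) ∂μ := by
      refine lintegral_congr fun x => ?_
      rw [← enorm_eq_nnnorm, ← ofReal_norm, Real.norm_eq_abs,
        ENNReal.ofReal_rpow_of_nonneg (abs_nonneg _) hp0.le]
    rw [e1, e2]
    calc ∫⁻ x, ENNReal.ofReal (|(μ[f|m]) x| ^ p) ∂μ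
        ≤ ∫⁻ x, ENNReal.ofReal (G x) ∂μ := by
          refine lintegral_mono_ae ?_
          filter_upwards [hkey] with x hx
          exact ENNReal.ofReal_le_ofReal hx
      _ = ENNReal.ofReal (∫ x, G x ∂μ) := (ofReal_integral_eq_lintegral_ofReal hGint hGnn).symm
      _ = ENNReal.ofReal (∫ x, |f x| ^ p ∂μ) := by rw [hG, integral_condExp hm]
      _ = ∫⁻ x, ENNReal.ofReal (|f x| ^ p) ∂μ := ofReal_integral_eq_lintegral_ofReal hfp
          (Eventually.of_forall fun x => rpow_nonneg (abs_nonneg _) p)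
  rw [eLpNorm_eq_lintegral_rpow_enorm_toReal hq0 hqt, eLpNorm_eq_lintegral_rpow_enorm_toReal hq0 hqt, hqr]
  simp only [enorm_eq_nnnorm]
  gcongr


theorem stmt12_aux {Ω : Type*} (m : MeasurableSpace Ω) [m0 : MeasurableSpace Ω]
    (μ : Measure Ω) [IsProbabilityMeasure μ]
    (T Tinv : Ω → Ω)
    (hTinv' : Function.RightInverse Tinv T)
    (hTinvmp : MeasurePreserving Tinv μ μ)
    (hm : m ≤ m0) (hTm : m ≤ MeasurableSpace.comap T m)
    (p : ℝ) (hp : 1 ≤ p)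
    (P : (Ω → ℝ) → (Ω → ℝ))
    (hP : ∀ g : Ω → ℝ, P g = fun x => g (Tinv x) - (μ[(fun y => g (Tinv y))|m]) x)
    (f : Ω → ℝ) (hf : MemLp f (ENNReal.ofReal p) μ) (hf0 : μ[f|m] =ᵐ[μ] 0)
    (k : ℕ) :
    eLpNorm (P^[k] f) (ENNReal.ofReal p) μ ≤ 2 * eLpNorm f (ENNReal.ofReal p) μ := by
  haveI : IsFiniteMeasure (μ.trim hm) := isFiniteMeasure_trim hm
  have hp0 : (0:ℝ) < p := lt_of_lt_of_le one_pos hp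
  have hq1 : (1:ℝ≥0∞) ≤ ENNReal.ofReal p := by
    rw [← ENNReal.ofReal_one]; exact ENNReal.ofReal_le_ofReal hp
  -- comap Tinv m ≤ m
  have hcomap : MeasurableSpace.comap Tinv m ≤ m := by
    have h1 : MeasurableSpace.comap Tinv (MeasurableSpace.comap T m) = m := by
      rw [MeasurableSpace.comap_comp]
      have : T ∘ Tinv = id := funext hTinv'
      rw [this, MeasurableSpace.comap_id]
    calc MeasurableSpace.comap Tinv m ≤ MeasurableSpace.comap Tinv (MeasurableSpace.comap T m) :=
          MeasurableSpace.comap_mono hTm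
      _ = m := h1
  have hTinv_meas_m : @Measurable Ω Ω m m Tinv := @measurable_iff_comap_le Ω Ω m m Tinv |>.mpr hcomap
  -- iterates of Tinv
  have hiter := fun n : ℕ => hTinvmp.iterate n
  have hg : ∀ n : ℕ, MemLp (fun x => f (Tinv^[n] x)) (ENNReal.ofReal p) μ := fun n =>
    hf.comp_measurePreserving (hiter n)
  have hgint : ∀ n : ℕ, Integrable (fun x => f (Tinv^[n] x)) μ := fun n => (hg n).integrable hq1
  -- key induction
  have key : ∀ n : ℕ, P^[n] f =ᵐ[μ]
      fun x => f (Tinv^[n] x) - (μ[(fun y => f (Tinv^[n] y))|m]) x := by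
    intro n
    induction n with
    | zero =>
      simp only [Function.iterate_zero, id_eq]
      filter_upwards [hf0] with x hx
      rw [show (μ[(fun y => f y)|m]) x = (μ[f|m]) x from rfl, hx]
      simp
    | succ n ih =>
      set g : Ω → ℝ := fun x => f (Tinv^[n] x) with hgdef
      set g' : Ω → ℝ := fun x => f (Tinv^[n+1] x) with hg'def
      set h : Ω → ℝ := μ[g|m] with hhdef
      have hcomp : (fun x => (P^[n] f) (Tinv x)) =ᵐ[μ]
          fun x => g' x - h (Tinv x) := by
        have := hTinvmp.quasiMeasurePreserving.ae_eq_comp ih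
        refine this.trans ?_
        refine Eventually.of_forall fun x => ?_
        simp only [Function.comp_apply, hgdef, hg'def, Function.iterate_succ_apply]
      have hhsm : StronglyMeasurable[m] (fun x => h (Tinv x)) :=
        (stronglyMeasurable_condExp (m := m)).comp_measurable hTinv_meas_m
      have hhint : Integrable (fun x => h (Tinv x)) μ := by
        have := (hTinvmp.integrable_comp
          (stronglyMeasurable_condExp.mono hm).aestronglyMeasurable).mpr
          (integrable_condExp (m := m) (f := g))
        exact this
      have hcond_h : μ[(fun x => h (Tinv x))|m] = fun x => h (Tinv x) :=
        condExp_of_stronglyMeasurable hm hhsm hhint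
      have hstep : P^[n+1] f =ᵐ[μ] fun x => g' x - (μ[g'|m]) x := by
        rw [Function.iterate_succ_apply', hP]
        have hc1 : μ[(fun y => (P^[n] f) (Tinv y))|m] =ᵐ[μ]
            μ[(fun x => g' x - h (Tinv x))|m] := condExp_congr_ae hcomp
        have hc2 : μ[(fun x => g' x - h (Tinv x))|m] =ᵐ[μ]
            μ[g'|m] - μ[(fun x => h (Tinv x))|m] := condExp_sub (hgint (n+1)) hhint m
        filter_upwards [hcomp, hc1, hc2] with x e1 e2 e3
        have : (μ[(fun y => (P^[n] f) (Tinv y))|m]) x = (μ[g'|m]) x - h (Tinv x) := by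
          rw [e2, e3]
          simp only [Pi.sub_apply, hcond_h]
        rw [e1, this]
        ring
      exact hstep
  -- conclude
  have hfinal := key k
  rw [eLpNorm_congr_ae hfinal]
  have hmeas1 : AEStronglyMeasurable (fun x => f (Tinv^[k] x)) μ := (hg k).1
  have hmeas2 : AEStronglyMeasurable (μ[(fun y => f (Tinv^[k] y))|m]) μ :=
    (stronglyMeasurable_condExp.mono hm).aestronglyMeasurable
  have hsub : eLpNorm ((fun x => f (Tinv^[k] x)) - μ[(fun y => f (Tinv^[k] y))|m])
        (ENNReal.ofReal p) μ
      ≤ eLpNorm (fun x => f (Tinv^[k] x)) (ENNReal.ofReal p) μ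
        + eLpNorm (μ[(fun y => f (Tinv^[k] y))|m]) (ENNReal.ofReal p) μ :=
    eLpNorm_sub_le hmeas1 hmeas2 hq1
  have hnorm1 : eLpNorm (fun x => f (Tinv^[k] x)) (ENNReal.ofReal p) μ
      = eLpNorm f (ENNReal.ofReal p) μ :=
    eLpNorm_comp_measurePreserving hf.1 (hiter k)
  have hnorm2 : eLpNorm (μ[(fun y => f (Tinv^[k] y))|m]) (ENNReal.ofReal p) μ
      ≤ eLpNorm f (ENNReal.ofReal p) μ := by
    refine le_trans (condexp_contract μ m hm p hp _ (hg k)) ?_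
    rw [hnorm1]
  calc eLpNorm (fun x => f (Tinv^[k] x) - (μ[(fun y => f (Tinv^[k] y))|m]) x)
        (ENNReal.ofReal p) μ
      = eLpNorm ((fun x => f (Tinv^[k] x)) - μ[(fun y => f (Tinv^[k] y))|m])
        (ENNReal.ofReal p) μ := rfl
    _ ≤ _ := hsub
    _ ≤ eLpNorm f (ENNReal.ofReal p) μ + eLpNorm f (ENNReal.ofReal p) μ := by
        rw [hnorm1]; exact add_le_add le_rfl hnorm2
    _ = 2 * eLpNorm f (ENNReal.ofReal p) μ := (two_mul _).symm


theorem stmt12 {Ω : Type*} [m0 : MeasurableSpace Ω] (μ : Measure Ω) [IsProbabilityMeasure μ]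
    (T Tinv : Ω → Ω) (hT : MeasurePreserving T μ μ) (hTbij : Function.Bijective T)
    (hTinv : Function.LeftInverse Tinv T) (hTinv' : Function.RightInverse Tinv T)
    (hTinvmp : MeasurePreserving Tinv μ μ)
    (m : MeasurableSpace Ω) (hm : m ≤ m0) (hTm : m ≤ MeasurableSpace.comap T m)
    (p : ℝ) (hp : 1 ≤ p)
    (P : (Ω → ℝ) → (Ω → ℝ))
    (hP : ∀ g : Ω → ℝ, P g = fun x => g (Tinv x) - (μ[(fun y => g (Tinv y))|m]) x)
    (f : Ω → ℝ) (hf : MemLp f (ENNReal.ofReal p) μ) (hf0 : μ[f|m] =ᵐ[μ] 0)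
    (k : ℕ) (hk : 1 ≤ k) :
    eLpNorm (P^[k] f) (ENNReal.ofReal p) μ ≤ 2 * eLpNorm f (ENNReal.ofReal p) μ :=
  @stmt12_aux Ω m m0 μ _ T Tinv hTinv' hTinvmp hm hTm p hp P hP f hf hf0 k
end
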